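/- arXiv:math/0606366 — 3 statements merged into one kernel-verified Lean document; each statement's English description precedes it below -/
import Mathlib

section
/- Let L be a finite semilattice. The map Γ : ℂ^L → ℂ^L sending the basis vector e_t (for t ∈ L) to the indicator function of the down-set {s ∈ L : s ≼ t} (where ≼ is the canonical order) is multiplicative: Γ(e_s * e_t) = Γ(e_s)·Γ(e_t), where the domain carries the semigroup-algebra (convolution) product and the codomain carries pointwise multiplication. -/
open Finset Classical

/-- The Schützenberger representation of a finite semilattice, as a linear map
`ℂ^L → ℂ^L` sending the basis vector `e_t` to the indicator of the down-set of
`t` (with respect to the canonical order `s ≼ t ↔ s * t = s`). -/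
noncomputable def schutzRep {L : Type*} [Mul L] [Fintype L] (a : L → ℂ) : L → ℂ :=
  fun x => ∑ t : L, if x * t = x then a t else 0

theorem mul_mul_eq_self_iff {L : Type*} [CommSemigroup L] {s t : L}
    (hs : IsIdempotentElem s) (ht : IsIdempotentElem t) (x : L) :
    x * (s * t) = x ↔ x * s = x ∧ x * t = x := by
  refine ⟨fun h => ⟨?_, ?_⟩, fun ⟨hxs, hxt⟩ => by rw [← mul_assoc, hxs, hxt]⟩
  · calc x * s = x * (s * t) * s := by rw [h]
      _ = x * (s * s * t) := by rw [mul_assoc, mul_right_comm s t s]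
      _ = x := by rw [hs.eq, h]
  · calc x * t = x * (s * t) * t := by rw [h]
      _ = x * (s * (t * t)) := by rw [mul_assoc, mul_assoc s]
      _ = x := by rw [ht.eq, h]

theorem schutzRep_single {L : Type*} [Mul L] [Fintype L] [DecidableEq L] (u : L) :
    schutzRep (Pi.single u (1 : ℂ)) = fun x => if x * u = x then 1 else 0 := by
  funext x
  rw [schutzRep, Finset.sum_eq_single u (fun t _ htu => by simp [htu]) (by simp)]
  simp

/-- The Schützenberger representation of a finite semilattice is multiplicative:
`Γ(e_s * e_t) = Γ(e_s) · Γ(e_t)`, where `e_s e_t = e_{st}` is the convolution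
product of basis vectors and the codomain has pointwise multiplication. -/
theorem schutzRep_multiplicative {L : Type*} [CommSemigroup L] [Fintype L]
    [DecidableEq L] (hidem : ∀ s : L, s * s = s) (s t : L) :
    schutzRep (Pi.single (s * t) (1 : ℂ)) =
      schutzRep (Pi.single s (1 : ℂ)) * schutzRep (Pi.single t (1 : ℂ)) := by
  funext x
  simp only [schutzRep_single, Pi.mul_apply, ite_zero_mul_ite_zero, one_mul,
    mul_mul_eq_self_iff (hidem s) (hidem t)]
end

section
/- Let L be a finite semilattice with zero element θ, and let Γ : ℓ¹(L) → ℓ¹(L) denote the Schützenberger representation (which is a linear bijection). Then the operator norm of Γ^{-1} (with respect to the ℓ¹ norms) is at most 2^{|L|−1}. -/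
/-!
In the canonical order `x ≤ t ↔ x * t = x` one has `Γ b x = b x + ∑_{t > x} b t`, so `b = Γ⁻¹ a`
satisfies `‖b x‖ ≤ ‖a x‖ + ∑_{t > x} ‖b t‖`. Summing this over an upper set and peeling off a
minimal element `m` bounds `‖b m‖` by `‖a m‖` plus the sum over the rest, so each element at most
doubles the bound; starting from a single element this gives `2 ^ (|L| - 1)`.
-/

open Finset Classical

section UpperSum

variable {α : Type*} [PartialOrder α] [Fintype α] {f g : α → ℝ}

theorem two_mul_sum_le_two_pow_card_mul_sum_of_isUpperSet (hf : 0 ≤ f) (hg : 0 ≤ g)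
    (hfg : ∀ x, f x ≤ g x + ∑ t with x < t, f t) (S : Finset α) (hS : IsUpperSet (S : Set α)) :
    2 * ∑ x ∈ S, f x ≤ 2 ^ #S * ∑ x ∈ S, g x := by
  induction S using Finset.strongInduction with
  | H S ih =>
  rcases S.eq_empty_or_nonempty with rfl | hne
  · simp
  obtain ⟨m, hm, hmin⟩ := S.exists_minimal hne
  have hS' : IsUpperSet (S.erase m : Set α) := by
    rw [coe_erase]
    exact hS.erase fun b hb hbm => le_antisymm hbm (hmin hb hbm)
  have hIoi : univ.filter (m < ·) ⊆ S.erase m := fun t ht => by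
    rw [mem_filter] at ht
    exact mem_erase.2 ⟨ht.2.ne', hS ht.2.le hm⟩
  have hfm : f m ≤ g m + ∑ x ∈ S.erase m, f x :=
    (hfg m).trans <| by gcongr; exact fun x _ _ => hf x
  have ih' := ih _ (erase_ssubset hm) hS'
  rw [← add_sum_erase S f hm, ← add_sum_erase S g hm, card_erase_add_one hm |>.symm, pow_succ]
  calc 2 * (f m + ∑ x ∈ S.erase m, f x) ≤ 2 * g m + 2 * (2 * ∑ x ∈ S.erase m, f x) := by linarith
    _ ≤ 2 * g m + 2 * (2 ^ #(S.erase m) * ∑ x ∈ S.erase m, g x) := by gcongr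
    _ ≤ 2 ^ #(S.erase m) * 2 * (g m + ∑ x ∈ S.erase m, g x) := by
      have := mul_le_mul_of_nonneg_right (one_le_pow₀ (n := #(S.erase m)) one_le_two) (hg m)
      linarith

theorem sum_le_two_pow_card_sub_one_mul_sum (hf : 0 ≤ f) (hg : 0 ≤ g)
    (hfg : ∀ x, f x ≤ g x + ∑ t with x < t, f t) :
    ∑ x, f x ≤ 2 ^ (Fintype.card α - 1) * ∑ x, g x := by
  rcases isEmpty_or_nonempty α with _ | _
  · simp
  have h := two_mul_sum_le_two_pow_card_mul_sum_of_isUpperSet hf hg hfg univ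
    (by simpa using isUpperSet_univ)
  rw [card_univ, ← Nat.sub_add_cancel Fintype.card_pos, pow_succ] at h
  linarith

end UpperSum

abbrev partialOrderOfIdempotent {L : Type*} [CommSemigroup L] (hidem : ∀ s : L, s * s = s) :
    PartialOrder L where
  le x y := x * y = x
  le_refl := hidem
  le_trans a b c hab hbc := by
    rw [← hab, mul_assoc, hbc]
  le_antisymm a b hab hba := by
    change a * b = a at hab
    change b * a = b at hba
    rw [← hab, mul_comm, hba]

section Schutzenberger

variable {L : Type*} [Mul L] [Fintype L] [PartialOrder L]

theorem schutzRep_apply_eq_add_sum_lt (hle : ∀ x t : L, x ≤ t ↔ x * t = x) (b : L → ℂ) (x : L) :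
    schutzRep b x = b x + ∑ t with x < t, b t := by
  have hIci : univ.filter (x ≤ ·) = insert x (univ.filter (x < ·)) := by
    ext t
    simp [le_iff_eq_or_lt, eq_comm]
  simp only [schutzRep, ← hle]
  rw [← sum_filter, hIci, sum_insert (by simp)]

theorem norm_le_norm_schutzRep_add_sum_lt (hle : ∀ x t : L, x ≤ t ↔ x * t = x) (b : L → ℂ) (x : L) :
    ‖b x‖ ≤ ‖schutzRep b x‖ + ∑ t with x < t, ‖b t‖ := by
  have hbx : b x = schutzRep b x - ∑ t with x < t, b t := by
    rw [schutzRep_apply_eq_add_sum_lt hle]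
    ring
  calc ‖b x‖ ≤ ‖schutzRep b x‖ + ‖∑ t with x < t, b t‖ := hbx ▸ norm_sub_le _ _
    _ ≤ _ := by gcongr; exact norm_sum_le _ _

end Schutzenberger

theorem schutzRep_inverse_norm_bound_general {L : Type*} [CommSemigroup L] [Fintype L]
    (hidem : ∀ s : L, s * s = s)
    (M : (L → ℂ) → (L → ℂ))
    (hM : ∀ a : L → ℂ, schutzRep (M a) = a ∧ M (schutzRep a) = a) :
    ∀ a : L → ℂ,
      ∑ x : L, ‖M a x‖ ≤
        2 ^ (Fintype.card L - 1) * ∑ t : L, ‖a t‖ := by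
  let _ : PartialOrder L := partialOrderOfIdempotent hidem
  intro a
  refine sum_le_two_pow_card_sub_one_mul_sum (fun _ => norm_nonneg _) (fun _ => norm_nonneg _)
    fun x => ?_
  simpa only [(hM a).1] using norm_le_norm_schutzRep_add_sum_lt (fun _ _ => Iff.rfl) (M a) x

/-- For a finite semilattice `L` with zero element `θ`, the inverse of the
Schützenberger representation `Γ : ℓ¹(L) → ℓ¹(L)` has operator norm at most
`2^{|L|−1}` with respect to the `ℓ¹` norms. -/
theorem schutzRep_inverse_norm_bound {L : Type*} [CommSemigroup L] [Fintype L]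
    (hidem : ∀ s : L, s * s = s) (θ : L) (hθ : ∀ x : L, x * θ = θ ∧ θ * x = θ)
    (M : (L → ℂ) → (L → ℂ))
    (hM : ∀ a : L → ℂ, schutzRep (M a) = a ∧ M (schutzRep a) = a) :
    ∀ a : L → ℂ,
      ∑ x : L, ‖M a x‖ ≤
        2 ^ (Fintype.card L - 1) * ∑ t : L, ‖a t‖ :=
  schutzRep_inverse_norm_bound_general hidem M hM
end

section
/- Let L be a finite unital semilattice with |L| = n, and let μ be the Möbius function of (L, ≼). If the element Δ = Σ_{(s,t)} (Σ_{x : s ≼ x, t ≼ x} μ(s,x)μ(t,x)) e_s ⊗ e_t (the unique diagonal of ℂ[L] transported via the Schützenberger isomorphism) has ℓ¹ norm at most C, then n ≤ C. -/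
/-!
The `ℓ¹` norm of `Δ` dominates its diagonal part `∑ s, |Δ(s,s)|`, and each diagonal
coefficient `Δ(s,s) = ∑_{x ⪰ s} μ(s,x)²` is at least its term `μ(s,s)² = 1`.
-/

open Finset Classical

theorem Fintype.card_le_sum_sum_abs_of_one_le_abs_diag {ι 𝕜 : Type*} [Fintype ι]
    [Ring 𝕜] [LinearOrder 𝕜] [IsStrictOrderedRing 𝕜] (f : ι → ι → 𝕜)
    (hf : ∀ i, 1 ≤ |f i i|) :
    (Fintype.card ι : 𝕜) ≤ ∑ i, ∑ j, |f i j| :=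
  calc (Fintype.card ι : 𝕜) = ∑ _i : ι, (1 : 𝕜) := by simp
    _ ≤ ∑ i, |f i i| := sum_le_sum fun i _ => hf i
    _ ≤ ∑ i, ∑ j, |f i j| :=
      sum_le_sum fun i _ => single_le_sum (fun j _ => abs_nonneg (f i j)) (mem_univ i)

section Diagonal

variable (𝕜 : Type*) {L : Type*} [Ring 𝕜] [Preorder L] [Fintype L] [LocallyFiniteOrder L]
  [DecidableEq L]

/-- The coefficient of `e_s ⊗ e_t` in `Δ`. -/
noncomputable def diagonalCoeff (s t : L) : 𝕜 :=
  ∑ x : L, if s ≤ x ∧ t ≤ x then IncidenceAlgebra.mu 𝕜 s x * IncidenceAlgebra.mu 𝕜 t x else 0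

theorem one_le_diagonalCoeff_self [LinearOrder 𝕜] [IsStrictOrderedRing 𝕜] (s : L) :
    1 ≤ diagonalCoeff 𝕜 s s := by
  have hterm_nonneg : ∀ x ∈ (univ : Finset L), (0 : 𝕜) ≤
      if s ≤ x ∧ s ≤ x then IncidenceAlgebra.mu 𝕜 s x * IncidenceAlgebra.mu 𝕜 s x else 0 := by
    intro x _
    split_ifs
    exacts [mul_self_nonneg _, le_rfl]
  calc (1 : 𝕜) = if s ≤ s ∧ s ≤ s then
        IncidenceAlgebra.mu 𝕜 s s * IncidenceAlgebra.mu 𝕜 s s else 0 := by simp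
    _ ≤ diagonalCoeff 𝕜 s s := single_le_sum hterm_nonneg (mem_univ s)

end Diagonal

theorem card_le_of_diagonal_norm_le_general {L : Type*} [PartialOrder L]
    [Fintype L] [LocallyFiniteOrder L] [DecidableEq L]
    (C : ℝ)
    (hnorm : ∑ s : L, ∑ t : L,
        |∑ x : L, if s ≤ x ∧ t ≤ x then
            IncidenceAlgebra.mu ℝ s x * IncidenceAlgebra.mu ℝ t x else 0| ≤ C) :
    (Fintype.card L : ℝ) ≤ C :=
  (Fintype.card_le_sum_sum_abs_of_one_le_abs_diag (diagonalCoeff ℝ) fun s =>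
    (one_le_diagonalCoeff_self ℝ s).trans (le_abs_self _)).trans hnorm

/-- For a finite unital semilattice `L` with `|L| = n`: if the unique diagonal of
`ℂ[L]` (transported through the Schützenberger isomorphism), whose coefficient at
`e_s ⊗ e_t` is `Σ_{x ⪰ s, x ⪰ t} μ(s,x) μ(t,x)`, has `ℓ¹` norm at most `C`, then
`n ≤ C`. -/
theorem card_le_of_diagonal_norm_le {L : Type*} [CommMonoid L] [PartialOrder L]
    [Fintype L] [LocallyFiniteOrder L] [DecidableEq L]
    (hidem : ∀ s : L, s * s = s)
    (horder : ∀ x y : L, x ≤ y ↔ x * y = x)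
    (C : ℝ)
    (hnorm : ∑ s : L, ∑ t : L,
        |∑ x : L, if s ≤ x ∧ t ≤ x then
            IncidenceAlgebra.mu ℝ s x * IncidenceAlgebra.mu ℝ t x else 0| ≤ C) :
    (Fintype.card L : ℝ) ≤ C :=
  card_le_of_diagonal_norm_le_general C hnorm
end
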